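/- arXiv:0704.1195 — 2 statements merged into one kernel-verified Lean document; each statement's English description precedes it below -/
import Mathlib

section
/- Let α ∈ ℂ with 0 < |α| < 1, s ≥ 1, and Q a polynomial of degree at most s with Q(0) = 0; set f(z,w) = (αz, w z^s + Q(z)) and C₁ = max{|Q(z)|/|z| : |z| ≤ 1} (well-defined since Q(0)=0). Then for every R₂ > 0 and every n ≥ 1, the n-th iterate satisfies f^n(P(1, R₂)) ⊆ P(|α|^n, |α|^{n(n-1)/2}(R₂ + C₁) + |α|^{n-1} C₁/(1 - |α|)), where P(r, r') = {(z,w) : |z| < r, |w| < r'}. -/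
/-!
The first coordinate of the `n`-th iterate is exactly `αⁿ z`, of modulus `< aⁿ ≤ 1` where `a = |α|`.
There `s ≥ 1` gives `|w zˢ + Q(z)| ≤ aⁿ (|w| + C₁)`, so the second coordinate of the `(k+1)`-st
iterate is bounded by `Bₖ` with `B₀ = R₂ + C₁` and `Bₖ₊₁ = aᵏ⁺¹ (Bₖ + C₁)`. The majorant
`a^(k(k+1)/2) (R₂ + C₁) + C₁ aᵏ (1 - aᵏ) / (1 - a)` is stable under this recursion because
`(aᵏ - a)(1 - aᵏ) ≤ 0`, and dropping its factor `1 - aᵏ` gives the claimed radius.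
-/

open Finset

def skewProduct {R : Type*} [Semiring R] (α : R) (s : ℕ) (g : R → R) (q : R × R) : R × R :=
  (α * q.1, q.2 * q.1 ^ s + g q.1)

section skewProduct

variable {R : Type*} [Semiring R] (α : R) (s : ℕ) (g : R → R)

theorem skewProduct_iterate_fst (n : ℕ) (q : R × R) :
    ((skewProduct α s g)^[n] q).1 = α ^ n * q.1 := by
  induction n with
  | zero => simp
  | succ n ih => rw [Function.iterate_succ_apply', skewProduct, ih, pow_succ', mul_assoc]

theorem skewProduct_iterate_succ_snd (n : ℕ) (q : R × R) :
    ((skewProduct α s g)^[n + 1] q).2 =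
      ((skewProduct α s g)^[n] q).2 * (α ^ n * q.1) ^ s + g (α ^ n * q.1) := by
  rw [Function.iterate_succ_apply', skewProduct, skewProduct_iterate_fst]

end skewProduct

theorem norm_mul_pow_add_lt {𝕜 : Type*} [NormedDivisionRing 𝕜] {g : 𝕜 → 𝕜} {s : ℕ} {C r B : ℝ}
    (hg : ∀ z : 𝕜, ‖z‖ ≤ 1 → ‖g z‖ ≤ C * ‖z‖) (hC : 0 ≤ C) (hs : s ≠ 0) {z w : 𝕜}
    (hr0 : 0 < r) (hr1 : r ≤ 1) (hz : ‖z‖ ≤ r) (hw : ‖w‖ < B) :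
    ‖w * z ^ s + g z‖ < B * r + C * r := by
  have hz1 : ‖z‖ ≤ 1 := hz.trans hr1
  calc ‖w * z ^ s + g z‖ ≤ ‖w‖ * ‖z‖ ^ s + ‖g z‖ := by
        simpa only [norm_mul, norm_pow] using norm_add_le (w * z ^ s) (g z)
    _ ≤ ‖w‖ * r + C * r := by
        gcongr
        · exact (pow_le_of_le_one (norm_nonneg z) hz1 hs).trans hz
        · exact (hg z hz1).trans (by gcongr)
    _ < B * r + C * r := by gcongr

noncomputable def sndRadiusBound (a R C : ℝ) (k : ℕ) : ℝ :=
  a ^ (∑ i ∈ range (k + 1), i) * (R + C) + C * a ^ k * (1 - a ^ k) / (1 - a)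

section sndRadiusBound

variable {a : ℝ} (R : ℝ) {C : ℝ}

theorem pow_sub_mul_one_sub_pow_nonpos (ha0 : 0 ≤ a) (ha1 : a ≤ 1) (k : ℕ) :
    (a ^ k - a) * (1 - a ^ k) ≤ 0 := by
  rcases k with _ | k
  · simp
  · exact mul_nonpos_of_nonpos_of_nonneg
      (sub_nonpos.2 (pow_le_of_le_one ha0 ha1 k.succ_ne_zero))
      (sub_nonneg.2 (pow_le_one₀ ha0 ha1))

theorem sndRadiusBound_zero : sndRadiusBound a R C 0 = R + C := by
  simp [sndRadiusBound]

theorem sndRadiusBound_mul_pow_add_le (ha0 : 0 ≤ a) (ha1 : a < 1) (hC : 0 ≤ C) (k : ℕ) :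
    sndRadiusBound a R C k * a ^ (k + 1) + C * a ^ (k + 1) ≤ sndRadiusBound a R C (k + 1) := by
  have h1a : 0 < 1 - a := sub_pos.2 ha1
  have hdiff : sndRadiusBound a R C (k + 1) -
      (sndRadiusBound a R C k * a ^ (k + 1) + C * a ^ (k + 1)) =
        C * a ^ (k + 1) * -((a ^ k - a) * (1 - a ^ k)) / (1 - a) := by
    simp only [sndRadiusBound, sum_range_succ _ (k + 1), pow_add]
    field_simp
    ring
  rw [← sub_nonneg, hdiff]
  have hkey := neg_nonneg.2 (pow_sub_mul_one_sub_pow_nonpos ha0 ha1.le k)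
  positivity

theorem sndRadiusBound_le (ha0 : 0 ≤ a) (ha1 : a < 1) (hC : 0 ≤ C) (k : ℕ) :
    sndRadiusBound a R C k ≤ a ^ (∑ i ∈ range (k + 1), i) * (R + C) + a ^ k * C / (1 - a) := by
  rw [sndRadiusBound, mul_comm (a ^ k) C]
  have h1a : 0 ≤ 1 - a := (sub_pos.2 ha1).le
  gcongr _ + ?_ / _
  exact mul_le_of_le_one_right (by positivity) (sub_le_self _ (by positivity))

end sndRadiusBound

theorem norm_skewProduct_iterate_succ_snd_lt {𝕜 : Type*} [NormedDivisionRing 𝕜] {α : 𝕜} {s : ℕ}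
    {g : 𝕜 → 𝕜} {C R : ℝ} (hα0 : 0 < ‖α‖) (hα1 : ‖α‖ < 1) (hs : s ≠ 0)
    (hg : ∀ z : 𝕜, ‖z‖ ≤ 1 → ‖g z‖ ≤ C * ‖z‖) (hC : 0 ≤ C)
    {q : 𝕜 × 𝕜} (hq1 : ‖q.1‖ < 1) (hq2 : ‖q.2‖ < R) (k : ℕ) :
    ‖((skewProduct α s g)^[k + 1] q).2‖ < sndRadiusBound ‖α‖ R C k := by
  induction k with
  | zero =>
    rw [skewProduct_iterate_succ_snd, sndRadiusBound_zero]
    simpa using norm_mul_pow_add_lt hg hC hs one_pos le_rfl (by simpa using hq1.le) hq2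
  | succ k ih =>
    have hr0 : 0 < ‖α‖ ^ (k + 1) := pow_pos hα0 _
    have hz : ‖α ^ (k + 1) * q.1‖ ≤ ‖α‖ ^ (k + 1) := by
      rw [norm_mul, norm_pow]
      exact mul_le_of_le_one_right hr0.le hq1.le
    rw [skewProduct_iterate_succ_snd]
    calc _ < sndRadiusBound ‖α‖ R C k * ‖α‖ ^ (k + 1) + C * ‖α‖ ^ (k + 1) :=
          norm_mul_pow_add_lt hg hC hs hr0 (pow_le_one₀ hα0.le hα1.le) hz ih
      _ ≤ _ := sndRadiusBound_mul_pow_add_le R hα0.le hα1 hC k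

theorem enoki_iterate_bidisc_estimate_general
    (α : ℂ) (hα0 : 0 < ‖α‖) (hα1 : ‖α‖ < 1)
    (s : ℕ) (hs : 1 ≤ s)
    (Q : Polynomial ℂ)
    (C₁ : ℝ)
    (hC₁ : ∀ z : ℂ, ‖z‖ ≤ 1 →
      ‖Q.eval z‖ ≤ C₁ * ‖z‖)
    (f : ℂ × ℂ → ℂ × ℂ)
    (hf : ∀ z w : ℂ, f (z, w) = (α * z, w * z ^ s + Q.eval z))
    (P : ℝ → ℝ → Set (ℂ × ℂ))
    (hP : ∀ r r' : ℝ, P r r' =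
      {q : ℂ × ℂ | ‖q.1‖ < r ∧ ‖q.2‖ < r'})
    (R₂ : ℝ) :
    ∀ n : ℕ, 1 ≤ n → ∀ q ∈ P 1 R₂,
      f^[n] q ∈ P ((‖α‖) ^ n)
        ((‖α‖) ^ (n * (n - 1) / 2) * (R₂ + C₁)
          + (‖α‖) ^ (n - 1) * C₁ / (1 - ‖α‖)) := by
  have hf' : f = skewProduct α s Q.eval := funext fun q => hf q.1 q.2
  have hC₁0 : 0 ≤ C₁ := by simpa using (norm_nonneg _).trans (hC₁ 1 (by simp))
  intro n hn q hq
  rw [hP] at hq ⊢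
  obtain ⟨k, rfl⟩ := Nat.exists_eq_add_of_le' hn
  refine ⟨?_, ?_⟩
  · rw [hf', skewProduct_iterate_fst, norm_mul, norm_pow]
    exact mul_lt_of_lt_one_right (pow_pos hα0 _) hq.1
  · rw [← sum_range_id, Nat.add_sub_cancel, hf']
    exact (norm_skewProduct_iterate_succ_snd_lt hα0 hα1 (by omega) hC₁ hC₁0 hq.1 hq.2 k).trans_le
      (sndRadiusBound_le R₂ hα0.le hα1 hC₁0 k)

theorem enoki_iterate_bidisc_estimate
    (α : ℂ) (hα0 : 0 < ‖α‖) (hα1 : ‖α‖ < 1)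
    (s : ℕ) (hs : 1 ≤ s)
    (Q : Polynomial ℂ) (hQdeg : Q.natDegree ≤ s) (hQ0 : Q.eval 0 = 0)
    (C₁ : ℝ)
    (hC₁ : ∀ z : ℂ, ‖z‖ ≤ 1 →
      ‖Q.eval z‖ ≤ C₁ * ‖z‖)
    (f : ℂ × ℂ → ℂ × ℂ)
    (hf : ∀ z w : ℂ, f (z, w) = (α * z, w * z ^ s + Q.eval z))
    (P : ℝ → ℝ → Set (ℂ × ℂ))
    (hP : ∀ r r' : ℝ, P r r' =
      {q : ℂ × ℂ | ‖q.1‖ < r ∧ ‖q.2‖ < r'})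
    (R₂ : ℝ) (hR₂ : 0 < R₂) :
    ∀ n : ℕ, 1 ≤ n → ∀ q ∈ P 1 R₂,
      f^[n] q ∈ P ((‖α‖) ^ n)
        ((‖α‖) ^ (n * (n - 1) / 2) * (R₂ + C₁)
          + (‖α‖) ^ (n - 1) * C₁ / (1 - ‖α‖)) :=
  enoki_iterate_bidisc_estimate_general α hα0 hα1 s hs Q C₁ hC₁ f hf P hP R₂
end

section
/- Let p ≥ 2, ε > 0, and let μ be a finite positive Borel measure on the interval (0,1) such that for all 0 < a < b < 1 and all sufficiently large n ∈ ℕ: μ((a,b]) ≤ p^{-n} (b/a)^{2pⁿ} ε. Then for all 0 < r₁ < r₂ < 1 with r₂/r₁ ≤ e, we have μ((r₁, r₂]) ≤ 2·(r₂/r₁)·ε. -/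
/-!
Cut `(r₁, r₂]` at the points `r₁ δⁱ`, `i ≤ m = 2pᴺ`, where `δ = (r₂/r₁)^{1/m}`. Each piece has
ratio `δ` and `δ^m = r₂/r₁`, so the hypothesis bounds it by `p^{-N} (r₂/r₁) ε`; the `m` pieces add
up to `2 (r₂/r₁) ε`.
-/

open MeasureTheory Set

theorem MeasureTheory.measure_Ioc_le_nsmul_of_forall_Ioc_succ_le {X : Type*} [LinearOrder X]
    [MeasurableSpace X] (μ : Measure X) (a : ℕ → X) (N : ℕ) {C : ENNReal}
    (h : ∀ i < N, μ (Ioc (a i) (a (i + 1))) ≤ C) : μ (Ioc (a 0) (a N)) ≤ N • C :=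
  calc μ (Ioc (a 0) (a N))
      ≤ μ (⋃ i ∈ Finset.range N, Ioc (a i) (a (i + 1))) := measure_mono (Ioc_subset_biUnion_Ioc N a)
    _ ≤ ∑ i ∈ Finset.range N, μ (Ioc (a i) (a (i + 1))) := measure_biUnion_finset_le _ _
    _ ≤ ∑ _i ∈ Finset.range N, C := Finset.sum_le_sum fun i hi => h i (Finset.mem_range.mp hi)
    _ = N • C := by rw [Finset.sum_const, Finset.card_range]

theorem division_argument_measure_bound_general
    (p : ℕ) (hp : 2 ≤ p) (ε : ℝ)
    (μ : MeasureTheory.Measure ℝ)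
    (hμ : ∃ N : ℕ, ∀ n ≥ N, ∀ a b : ℝ, 0 < a → a < b → b < 1 →
        μ (Set.Ioc a b) ≤
          ENNReal.ofReal ((1 / (p : ℝ) ^ n) * (b / a) ^ (2 * p ^ n) * ε)) :
    ∀ r₁ r₂ : ℝ, 0 < r₁ → r₁ < r₂ → r₂ < 1 → r₂ / r₁ ≤ Real.exp 1 →
      μ (Set.Ioc r₁ r₂) ≤ ENNReal.ofReal (2 * (r₂ / r₁) * ε) := by
  intro r₁ r₂ hr₁ hr₁₂ hr₂ _
  obtain ⟨N, hN⟩ := hμ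
  have hp₀ : 0 < p := by omega
  set m := 2 * p ^ N
  have hm : m ≠ 0 := by have := pow_pos hp₀ N; omega
  set δ := (r₂ / r₁) ^ ((m : ℝ)⁻¹)
  have hδ : 1 < δ := Real.one_lt_rpow ((one_lt_div hr₁).2 hr₁₂) (by positivity)
  have hδm : δ ^ m = r₂ / r₁ := Real.rpow_inv_natCast_pow (div_pos (hr₁.trans hr₁₂) hr₁).le hm
  set a : ℕ → ℝ := fun i => r₁ * δ ^ i
  have ha_mono : Monotone a := fun i j hij => by
    simp only [a]; gcongr; exact hδ.le
  have ha_m : a m = r₂ := by simp only [a, hδm]; field_simp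
  have ha_ratio (i : ℕ) : a (i + 1) / a i = δ := by simp only [a]; field_simp; ring
  have piece (i : ℕ) (hi : i < m) :
      μ (Ioc (a i) (a (i + 1))) ≤ ENNReal.ofReal (1 / (p : ℝ) ^ N * (r₂ / r₁) * ε) := by
    have ha_lt_one : a (i + 1) < 1 := (ha_mono hi).trans_lt (ha_m ▸ hr₂)
    have h := hN N le_rfl (a i) (a (i + 1)) (by positivity)
      (mul_lt_mul_of_pos_left (pow_lt_pow_right₀ hδ i.lt_succ_self) hr₁) ha_lt_one
    rwa [ha_ratio, hδm] at h
  calc μ (Ioc r₁ r₂) = μ (Ioc (a 0) (a m)) := by rw [ha_m]; simp [a]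
    _ ≤ m • ENNReal.ofReal (1 / (p : ℝ) ^ N * (r₂ / r₁) * ε) :=
      measure_Ioc_le_nsmul_of_forall_Ioc_succ_le μ a m piece
    _ = ENNReal.ofReal (2 * (r₂ / r₁) * ε) := by
      rw [← ENNReal.ofReal_nsmul, nsmul_eq_mul]
      have : (p : ℝ) ≠ 0 := by positivity
      congr 1
      push_cast [m]
      field_simp

theorem division_argument_measure_bound
    (p : ℕ) (hp : 2 ≤ p) (ε : ℝ) (hε : 0 < ε)
    (μ : MeasureTheory.Measure ℝ) [MeasureTheory.IsFiniteMeasure μ]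
    (hμ : ∃ N : ℕ, ∀ n ≥ N, ∀ a b : ℝ, 0 < a → a < b → b < 1 →
        μ (Set.Ioc a b) ≤
          ENNReal.ofReal ((1 / (p : ℝ) ^ n) * (b / a) ^ (2 * p ^ n) * ε)) :
    ∀ r₁ r₂ : ℝ, 0 < r₁ → r₁ < r₂ → r₂ < 1 → r₂ / r₁ ≤ Real.exp 1 →
      μ (Set.Ioc r₁ r₂) ≤ ENNReal.ofReal (2 * (r₂ / r₁) * ε) :=
  division_argument_measure_bound_general p hp ε μ hμ
end
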